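/- For any real n×n matrix G and any v ∈ ℝⁿ, let C be the cofactor matrix of A = 1 + G·diag(v), i.e. C_{k,ℓ} = (−1)^{k+ℓ} times the determinant of the matrix obtained from A by deleting row k and column ℓ (so that the adjugate of A is the transpose of C). Then ∑_{k,ℓ=1}^n C_{k,ℓ} v_ℓ = ∑_{I⊆{1,…,n}} c_I v_I. -/

import Mathlib

open Matrix

/-- `g_I = det (G_I)`, the determinant of the submatrix of `G` indexed by `I × I`
(with `g_∅ = 1`). -/
noncomputable def gI {n : ℕ} (G : Matrix (Fin n) (Fin n) ℝ) (I : Finset (Fin n)) : ℝ :=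
  (G.submatrix (Subtype.val : {x // x ∈ I} → Fin n)
    (Subtype.val : {x // x ∈ I} → Fin n)).det

/-- The cofactor matrix of a square matrix: the transpose of its adjugate. -/
noncomputable def cofactor {m : Type*} [Fintype m] [DecidableEq m]
    (M : Matrix m m ℝ) : Matrix m m ℝ :=
  (Matrix.adjugate M)ᵀ

/-- `c_I`, the sum of all entries of the cofactor matrix of `G_I` (with `c_∅ = 0`). -/
noncomputable def cI {n : ℕ} (G : Matrix (Fin n) (Fin n) ℝ) (I : Finset (Fin n)) : ℝ :=
  ∑ k : {x // x ∈ I}, ∑ l : {x // x ∈ I},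
    cofactor (G.submatrix (Subtype.val : {x // x ∈ I} → Fin n)
      (Subtype.val : {x // x ∈ I} → Fin n)) k l

/-!
With `A = 1 + G diag(v)` and `𝟙` the all-ones vector, the left-hand side is `vᵀ adj(A) 𝟙`.
The matrix determinant lemma `det (A + u wᵀ) = det A + wᵀ adj(A) u` turns it into
`det (A + 𝟙 vᵀ) - det A`, and likewise `c_I = det (G_I + J) - det G_I` with `J = 𝟙 𝟙ᵀ`.
Since `A + 𝟙 vᵀ = 1 + (G + J) diag(v)`, expanding `det (1 + M diag(v)) = ∑_I det (M_I) v_I`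
into principal minors for `M = G + J` and `M = G` gives the claim term by term.
-/

theorem sum_finset_eq_empty_add_sum_singleton {m M : Type*} [Fintype m] [AddCommMonoid M]
    (f : Finset m → M) (hf : ∀ s : Finset m, 1 < s.card → f s = 0) :
    ∑ s, f s = f ∅ + ∑ k, f {k} := by
  classical
  rw [← Finset.sum_subset (Finset.subset_univ
    (Finset.univ.powersetCard 0 ∪ Finset.univ.powersetCard 1)) ?_]
  · rw [Finset.sum_union, Finset.powersetCard_zero, Finset.powersetCard_one,
      Finset.sum_singleton, Finset.sum_map]
    · rfl
    · exact Finset.disjoint_left.2 fun s h0 h1 => by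
        simp only [Finset.mem_powersetCard] at h0 h1; omega
  · intro s _ hs
    simp only [Finset.mem_union, Finset.mem_powersetCard, Finset.subset_univ, true_and] at hs
    exact hf s (by omega)

section CommRing

variable {m R : Type*} [Fintype m] [DecidableEq m] [CommRing R]

theorem det_add_vecMulVec (A : Matrix m m R) (u w : m → R) :
    (A + vecMulVec u w).det = A.det + w ⬝ᵥ (adjugate A *ᵥ u) := by
  set f : Finset m → R := fun s => detRowAlternating (s.piecewise (fun i => u i • w) A.row)
  have expand : (A + vecMulVec u w).det = ∑ s, f s := by
    rw [add_comm]
    exact detRowAlternating.map_add_univ (fun i => u i • w) A.row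
  have factor : ∀ s,
      f s = (∏ i ∈ s, u i) * detRowAlternating (s.piecewise (fun _ => w) A.row) := by
    intro s
    set P := s.piecewise (fun _ => w) A.row
    have hP : s.piecewise (fun i => u i • w) A.row = s.piecewise (fun i => u i • P i) P := by
      ext i : 1
      by_cases hi : i ∈ s <;> simp [P, hi]
    exact (congrArg detRowAlternating hP).trans
      (detRowAlternating.toMultilinearMap.map_piecewise_smul u P s)
  -- two rows taken from `vecMulVec u w` are both multiples of `w`
  have vanish : ∀ s : Finset m, 1 < s.card → f s = 0 := by
    intro s hs
    obtain ⟨i, hi, j, hj, hij⟩ := Finset.one_lt_card.1 hs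
    rw [factor, detRowAlternating.map_eq_zero_of_eq _ (by simp [hi, hj]) hij, mul_zero]
  have single : ∀ k, f {k} = u k * (A.updateRow k w).det := by
    intro k
    simp only [f, Finset.piecewise_singleton, AlternatingMap.map_update_smul, smul_eq_mul]
    rfl
  rw [expand, sum_finset_eq_empty_add_sum_singleton f vanish,
    Finset.sum_congr rfl fun k _ => single k, dotProduct_mulVec, dotProduct_comm]
  congr 1
  simp [dotProduct, ← cramer_transpose_apply, cramer_eq_adjugate_mulVec, ← adjugate_transpose,
    mulVec_transpose]

theorem det_one_add_eq_sum_det_submatrix (N : Matrix m m R) :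
    (1 + N).det = ∑ s : Finset m, (N.submatrix ((↑) : s → m) (↑)).det :=
  calc (1 + N).det = ∑ s : Finset m, (of (s.piecewise N.row (row 1))).det := by
        rw [add_comm]; exact detRowAlternating.map_add_univ N.row (row 1)
    _ = _ := Finset.sum_congr rfl fun s _ => det_piecewise_one_eq_submatrix_det N s

theorem det_one_add_mul_diagonal (M : Matrix m m R) (d : m → R) :
    (1 + M * diagonal d).det =
      ∑ s : Finset m, (M.submatrix ((↑) : s → m) (↑)).det * ∏ i ∈ s, d i := by
  rw [det_one_add_eq_sum_det_submatrix]
  refine Finset.sum_congr rfl fun s _ => ?_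
  have : (M * diagonal d).submatrix ((↑) : s → m) (↑) =
      M.submatrix (↑) (↑) * diagonal fun i : s => d i := by
    ext i j
    simp [mul_diagonal]
  rw [this, det_mul, det_diagonal, Finset.prod_coe_sort s d]

end CommRing

theorem sum_cofactor_mul {m : Type*} [Fintype m] [DecidableEq m] (M : Matrix m m ℝ)
    (w : m → ℝ) :
    ∑ k, ∑ l, cofactor M k l * w l = (M + vecMulVec 1 w).det - M.det := by
  rw [det_add_vecMulVec, add_sub_cancel_left, Finset.sum_comm]
  simp [cofactor, dotProduct, mulVec, Finset.mul_sum, mul_comm]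

theorem cI_eq_det_sub_det {n : ℕ} (G : Matrix (Fin n) (Fin n) ℝ) (I : Finset (Fin n)) :
    cI G I = ((G + vecMulVec 1 1).submatrix (Subtype.val : I → Fin n) Subtype.val).det -
      (G.submatrix (Subtype.val : I → Fin n) Subtype.val).det := by
  have h := sum_cofactor_mul (G.submatrix (Subtype.val : I → Fin n) Subtype.val) 1
  simp only [Pi.one_apply, mul_one] at h
  rw [cI, submatrix_add]
  exact h

/-- With `C` the cofactor matrix of `A = 1 + G diag(v)` (so `adjugate A = Cᵀ`),
`∑_{k,ℓ} C_{k,ℓ} v_ℓ = ∑_{I ⊆ {1,…,n}} c_I v_I`. -/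
theorem cofactor_sum_eq (n : ℕ) (G : Matrix (Fin n) (Fin n) ℝ) (v : Fin n → ℝ) :
    ∑ k : Fin n, ∑ l : Fin n, cofactor (1 + G * Matrix.diagonal v) k l * v l =
      ∑ I : Finset (Fin n), cI G I * ∏ i ∈ I, v i := by
  have hJ : 1 + G * diagonal v + vecMulVec 1 v = 1 + (G + vecMulVec 1 1) * diagonal v := by
    ext i j
    simp [add_mul, add_assoc]
  rw [sum_cofactor_mul, hJ, det_one_add_mul_diagonal, det_one_add_mul_diagonal,
    ← Finset.sum_sub_distrib]
  simp_rw [cI_eq_det_sub_det, sub_mul]
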